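/- In the setting of the previous statement (finite group extension $1 \to A \to W \to \Gamma \to 1$ with $\Gamma = \mathrm{Gal}(K/F)$, $A = K^{\times}$, and a character $\theta$ of $A$ with pairwise distinct conjugates): the group $A_{\varphi}$ of elements of $PGL(V)$ commuting with the image of the projective representation $\bar{\Theta} : W \to PGL(V)$ obtained from $\Theta = \mathrm{Ind}_A^W \theta$ is isomorphic to the group $\mathcal{A}_{\theta}$ of characters $\lambda : W \to \mathbb{C}^{\times}$ whose restriction to $A$ equals $a \mapsto \theta(a^{\tau})\theta(a)^{-1}$ for some $\tau \in \Gamma$. -/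
import Mathlib


/-- The space of the induced representation `Ind_A^W θ` of a character `θ` of a subgroup
`ι : A →* W`: functions `φ : W → ℂ` with `φ (ι a * w) = θ a * φ w`. -/
noncomputable def indSpace {A W : Type*} [CommGroup A] [Group W] (ι : A →* W) (θ : A →* ℂˣ) :
    Submodule ℂ (W → ℂ) where
  carrier := {φ | ∀ (a : A) (w : W), φ (ι a * w) = (θ a : ℂ) * φ w}
  add_mem' := by
    intro φ ψ hφ hψ a w
    simp only [Pi.add_apply, hφ a w, hψ a w]
    ring
  zero_mem' := by
    intro a w
    simp
  smul_mem' := by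
    intro c φ hφ a w
    simp only [Pi.smul_apply, hφ a w, smul_eq_mul]
    ring

/-- The action of `w : W` on the induced representation space, by right translation. -/
noncomputable def indAct {A W : Type*} [CommGroup A] [Group W] (ι : A →* W) (θ : A →* ℂˣ) (w : W) :
    indSpace ι θ →ₗ[ℂ] indSpace ι θ where
  toFun φ := ⟨fun x => (φ : W → ℂ) (x * w), fun a x => by
    simpa [mul_assoc] using φ.2 a (x * w)⟩
  map_add' φ ψ := rfl
  map_smul' c φ := rfl

/-- The induced representation `Θ = Ind_A^W θ` as a homomorphism from `W` to the general
linear group of its space. -/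
noncomputable def indRep {A W : Type*} [CommGroup A] [Group W] (ι : A →* W) (θ : A →* ℂˣ) :
    W →* (indSpace ι θ →ₗ[ℂ] indSpace ι θ)ˣ where
  toFun w :=
    { val := indAct ι θ w
      inv := indAct ι θ w⁻¹
      val_inv := LinearMap.ext fun φ => Subtype.ext (funext fun x => by
        show (φ : W → ℂ) (x * w * w⁻¹) = (φ : W → ℂ) x
        rw [mul_inv_cancel_right])
      inv_val := LinearMap.ext fun φ => Subtype.ext (funext fun x => by
        show (φ : W → ℂ) (x * w⁻¹ * w) = (φ : W → ℂ) x
        rw [inv_mul_cancel_right]) }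
  map_one' := Units.ext (LinearMap.ext fun φ => Subtype.ext (funext fun x => by
    show (φ : W → ℂ) (x * 1) = (φ : W → ℂ) x
    rw [mul_one]))
  map_mul' w₁ w₂ := Units.ext (LinearMap.ext fun φ => Subtype.ext (funext fun x => by
    show (φ : W → ℂ) (x * (w₁ * w₂)) = (φ : W → ℂ) (x * w₁ * w₂)
    rw [mul_assoc]))

open scoped Classical

section Aux

variable {A W Γ : Type*} [CommGroup A] [Group W] [Group Γ]
variable (ι : A →* W) (π : W →* Γ) (c : Γ →* MulAut A) (θ : A →* ℂˣ)

lemma act_apply (w : W) (φ : indSpace ι θ) (x : W) :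
    (((indRep ι θ w : (indSpace ι θ →ₗ[ℂ] indSpace ι θ)ˣ) :
      indSpace ι θ →ₗ[ℂ] indSpace ι θ) φ : W → ℂ) x = (φ : W → ℂ) (x * w) := rfl

lemma actA (hconj : ∀ (w : W) (a : A), w * ι a * w⁻¹ = ι (c (π w) a))
    (φ : indSpace ι θ) (a : A) (x : W) :
    (φ : W → ℂ) (x * ι a) = (θ (c (π x) a) : ℂ) * (φ : W → ℂ) x := by
  have h : x * ι a = ι (c (π x) a) * x := by
    rw [← hconj x a]; group
  rw [h]
  exact φ.2 (c (π x) a) x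

lemma char_inj (hθ : ∀ γ : Γ, (∀ a : A, θ (c γ a) = θ a) → γ = 1)
    {δ γ : Γ} (h : ∀ a : A, θ (c δ a) = θ (c γ a)) : δ = γ := by
  have key : ∀ b : A, θ (c (δ * γ⁻¹) b) = θ b := by
    intro b
    have h1 : c (δ * γ⁻¹) b = c δ (c γ⁻¹ b) := by
      rw [map_mul, MulAut.mul_apply]
    have h2 : c γ (c γ⁻¹ b) = b := by
      rw [← MulAut.mul_apply, ← map_mul, mul_inv_cancel, map_one, MulAut.one_apply]
    rw [h1, h (c γ⁻¹ b), h2]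
  exact mul_inv_eq_one.mp (hθ _ key)

noncomputable def mySec (hπ : Function.Surjective π) : Γ → W := Function.surjInv hπ

lemma mySec_spec (hπ : Function.Surjective π) (γ : Γ) :
    π (mySec π hπ γ) = γ := Function.surjInv_eq hπ γ

lemma pi_iota (hexact : MonoidHom.ker π = MonoidHom.range ι) (a : A) : π (ι a) = 1 := by
  have : ι a ∈ MonoidHom.ker π := hexact ▸ ⟨a, rfl⟩
  exact this

lemma pi_iota_mul (hexact : MonoidHom.ker π = MonoidHom.range ι) (a : A) (w : W) :
    π (ι a * w) = π w := by
  rw [map_mul, pi_iota ι π hexact, one_mul]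

lemma mem_range_of (hπ : Function.Surjective π)
    (hexact : MonoidHom.ker π = MonoidHom.range ι) (w : W) :
    w * (mySec π hπ (π w))⁻¹ ∈ MonoidHom.range ι := by
  rw [← hexact]
  simp [MonoidHom.mem_ker, mySec_spec]

noncomputable def myDec (hπ : Function.Surjective π)
    (hexact : MonoidHom.ker π = MonoidHom.range ι) (w : W) : A :=
  (mem_range_of ι π hπ hexact w).choose

lemma myDec_spec (hπ : Function.Surjective π)
    (hexact : MonoidHom.ker π = MonoidHom.range ι) (w : W) :
    ι (myDec ι π hπ hexact w) = w * (mySec π hπ (π w))⁻¹ :=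
  (mem_range_of ι π hπ hexact w).choose_spec

lemma myDec_decomp (hπ : Function.Surjective π)
    (hexact : MonoidHom.ker π = MonoidHom.range ι) (w : W) :
    ι (myDec ι π hπ hexact w) * mySec π hπ (π w) = w := by
  rw [myDec_spec]; group

lemma myDec_mul (hι : Function.Injective ι) (hπ : Function.Surjective π)
    (hexact : MonoidHom.ker π = MonoidHom.range ι) (a : A) (w : W) :
    myDec ι π hπ hexact (ι a * w) = a * myDec ι π hπ hexact w := by
  have h1 : π (ι a * w) = π w := pi_iota_mul ι π hexact a w
  apply hι
  have h2 := myDec_decomp ι π hπ hexact (ι a * w)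
  rw [h1] at h2
  have h3 := myDec_decomp ι π hπ hexact w
  rw [map_mul]
  have : ι (myDec ι π hπ hexact (ι a * w)) * mySec π hπ (π w)
      = (ι a * ι (myDec ι π hπ hexact w)) * mySec π hπ (π w) := by
    rw [h2, mul_assoc, h3]
  exact mul_right_cancel this

lemma myDec_sec (hι : Function.Injective ι) (hπ : Function.Surjective π)
    (hexact : MonoidHom.ker π = MonoidHom.range ι) (γ : Γ) :
    myDec ι π hπ hexact (mySec π hπ γ) = 1 := by
  apply hι
  rw [myDec_spec, map_one, mySec_spec]
  group

noncomputable def myE (hι : Function.Injective ι) (hπ : Function.Surjective π)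
    (hexact : MonoidHom.ker π = MonoidHom.range ι) (γ : Γ) : indSpace ι θ :=
  ⟨fun w => if π w = γ then (θ (myDec ι π hπ hexact w) : ℂ) else 0, by
    intro a w
    dsimp only
    rw [pi_iota_mul ι π hexact, myDec_mul ι π hι hπ hexact]
    by_cases h : π w = γ <;> simp [h, mul_comm]⟩

lemma myE_apply (hι : Function.Injective ι) (hπ : Function.Surjective π)
    (hexact : MonoidHom.ker π = MonoidHom.range ι) (γ : Γ) (x : W) :
    (myE ι π θ hι hπ hexact γ : W → ℂ) x
      = if π x = γ then (θ (myDec ι π hπ hexact x) : ℂ) else 0 := rfl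

lemma myE_sec (hι : Function.Injective ι) (hπ : Function.Surjective π)
    (hexact : MonoidHom.ker π = MonoidHom.range ι) (γ : Γ) :
    (myE ι π θ hι hπ hexact γ : W → ℂ) (mySec π hπ γ) = 1 := by
  rw [myE_apply]
  simp [mySec_spec, myDec_sec ι π hι hπ hexact]

lemma myE_ne (hι : Function.Injective ι) (hπ : Function.Surjective π)
    (hexact : MonoidHom.ker π = MonoidHom.range ι) (γ : Γ) :
    myE ι π θ hι hπ hexact γ ≠ 0 := by
  intro h
  have h2 := myE_sec ι π θ hι hπ hexact γ
  rw [h] at h2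
  simp at h2

lemma exists_ne_zero_coord {φ : indSpace ι θ} (h : φ ≠ 0) : ∃ x, (φ : W → ℂ) x ≠ 0 := by
  by_contra hc
  push_neg at hc
  exact h (Subtype.ext (funext fun x => by simpa using hc x))

lemma coe_smul_apply (t : ℂ) (φ : indSpace ι θ) (x : W) :
    ((t • φ : indSpace ι θ) : W → ℂ) x = t * (φ : W → ℂ) x := rfl

lemma supp_smul_e (hι : Function.Injective ι) (hπ : Function.Surjective π)
    (hexact : MonoidHom.ker π = MonoidHom.range ι) (γ : Γ) (φ : indSpace ι θ)
    (hs : ∀ x, π x ≠ γ → (φ : W → ℂ) x = 0) :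
    φ = ((φ : W → ℂ) (mySec π hπ γ)) • myE ι π θ hι hπ hexact γ := by
  apply Subtype.ext
  funext x
  rw [coe_smul_apply, myE_apply]
  by_cases h : π x = γ
  · have hx : ι (myDec ι π hπ hexact x) * mySec π hπ γ = x := by
      have h4 := myDec_decomp ι π hπ hexact x
      rwa [h] at h4
    have h5 := φ.2 (myDec ι π hπ hexact x) (mySec π hπ γ)
    rw [hx] at h5
    rw [h5, if_pos h]
    ring
  · rw [hs x h, if_neg h, mul_zero]

lemma eig_e (hconj : ∀ (w : W) (a : A), w * ι a * w⁻¹ = ι (c (π w) a))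
    (hι : Function.Injective ι) (hπ : Function.Surjective π)
    (hexact : MonoidHom.ker π = MonoidHom.range ι) (γ : Γ) (a : A) :
    ((indRep ι θ (ι a) : (indSpace ι θ →ₗ[ℂ] indSpace ι θ)ˣ) :
      indSpace ι θ →ₗ[ℂ] indSpace ι θ) (myE ι π θ hι hπ hexact γ)
      = (θ (c γ a) : ℂ) • myE ι π θ hι hπ hexact γ := by
  apply Subtype.ext
  funext x
  rw [act_apply, actA ι π c θ hconj, coe_smul_apply]
  by_cases h : π x = γ
  · rw [h]
  · rw [myE_apply, if_neg h, mul_zero, mul_zero]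

noncomputable def myRes (hexact : MonoidHom.ker π = MonoidHom.range ι)
    (γ : Γ) (φ : indSpace ι θ) : indSpace ι θ :=
  ⟨fun x => if π x = γ then (φ : W → ℂ) x else 0, by
    intro a w
    dsimp only
    rw [pi_iota_mul ι π hexact]
    by_cases h : π w = γ <;> simp [h, φ.2 a w]⟩

lemma myRes_apply (hexact : MonoidHom.ker π = MonoidHom.range ι) (γ : Γ)
    (φ : indSpace ι θ) (x : W) :
    (myRes ι π θ hexact γ φ : W → ℂ) x = if π x = γ then (φ : W → ℂ) x else 0 := rfl

lemma sum_myRes [Fintype Γ] (hexact : MonoidHom.ker π = MonoidHom.range ι)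
    (φ : indSpace ι θ) :
    ∑ γ : Γ, myRes ι π θ hexact γ φ = φ := by
  apply Subtype.ext
  rw [Submodule.coe_sum]
  funext x
  rw [Finset.sum_apply]
  simp only [myRes_apply]
  rw [Finset.sum_ite_eq]
  simp

end Aux
section Aux2

variable {A W Γ : Type*} [CommGroup A] [Group W] [Group Γ]
variable (ι : A →* W) (π : W →* Γ) (c : Γ →* MulAut A) (θ : A →* ℂˣ)

lemma unit_ne_zero (T : (indSpace ι θ →ₗ[ℂ] indSpace ι θ)ˣ) {φ : indSpace ι θ}
    (h : φ ≠ 0) : (T : indSpace ι θ →ₗ[ℂ] indSpace ι θ) φ ≠ 0 := by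
  intro h0
  apply h
  calc φ = (1 : indSpace ι θ →ₗ[ℂ] indSpace ι θ) φ := rfl
    _ = (((T⁻¹ : (indSpace ι θ →ₗ[ℂ] indSpace ι θ)ˣ) : indSpace ι θ →ₗ[ℂ] indSpace ι θ)
          * (T : indSpace ι θ →ₗ[ℂ] indSpace ι θ)) φ := by rw [T.inv_mul]
    _ = ((T⁻¹ : (indSpace ι θ →ₗ[ℂ] indSpace ι θ)ˣ) : indSpace ι θ →ₗ[ℂ] indSpace ι θ)
          ((T : indSpace ι θ →ₗ[ℂ] indSpace ι θ) φ) := rfl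
    _ = 0 := by rw [h0, map_zero]

lemma scalar_of_commute [Finite Γ]
    (hι : Function.Injective ι) (hπ : Function.Surjective π)
    (hexact : MonoidHom.ker π = MonoidHom.range ι)
    (hconj : ∀ (w : W) (a : A), w * ι a * w⁻¹ = ι (c (π w) a))
    (hθ : ∀ γ : Γ, (∀ a : A, θ (c γ a) = θ a) → γ = 1)
    (U : (indSpace ι θ →ₗ[ℂ] indSpace ι θ)ˣ)
    (hU : ∀ w : W,
      (U : indSpace ι θ →ₗ[ℂ] indSpace ι θ) * (indRep ι θ w : indSpace ι θ →ₗ[ℂ] indSpace ι θ)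
        = (indRep ι θ w : indSpace ι θ →ₗ[ℂ] indSpace ι θ) * U) :
    ∃ μ : ℂˣ, (U : indSpace ι θ →ₗ[ℂ] indSpace ι θ) = (μ : ℂ) • 1 := by
  haveI : Fintype Γ := Fintype.ofFinite Γ
  set Uv := (U : indSpace ι θ →ₗ[ℂ] indSpace ι θ) with hUv
  have hU' : ∀ (w : W) (φ : indSpace ι θ),
      Uv ((indRep ι θ w : indSpace ι θ →ₗ[ℂ] indSpace ι θ) φ)
        = (indRep ι θ w : indSpace ι θ →ₗ[ℂ] indSpace ι θ) (Uv φ) := by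
    intro w φ
    exact congrArg (fun f => f φ) (hU w)
  have heig : ∀ (γ : Γ) (a : A),
      (indRep ι θ (ι a) : indSpace ι θ →ₗ[ℂ] indSpace ι θ) (Uv (myE ι π θ hι hπ hexact γ))
        = (θ (c γ a) : ℂ) • Uv (myE ι π θ hι hπ hexact γ) := by
    intro γ a
    rw [← hU' (ι a), eig_e ι π c θ hconj hι hπ hexact, map_smul]
  have hsupp : ∀ (γ : Γ) (x : W), π x ≠ γ →
      ((Uv (myE ι π θ hι hπ hexact γ)) : W → ℂ) x = 0 := by
    intro γ x hx
    by_contra h0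
    apply hx
    apply char_inj c θ hθ (γ := γ) (δ := π x)
    intro a
    apply Units.ext
    have h1 := congrArg (fun φ : indSpace ι θ => (φ : W → ℂ) x) (heig γ a)
    rw [act_apply, actA ι π c θ hconj, coe_smul_apply] at h1
    exact mul_right_cancel₀ h0 h1
  obtain ⟨μ, hψ⟩ : ∃ μ : Γ → ℂ, ∀ γ,
      Uv (myE ι π θ hι hπ hexact γ) = μ γ • myE ι π θ hι hπ hexact γ :=
    ⟨fun γ => ((Uv (myE ι π θ hι hπ hexact γ)) : W → ℂ) (mySec π hπ γ),
     fun γ => supp_smul_e ι π θ hι hπ hexact γ _ (hsupp γ)⟩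
  have hUφ : ∀ (γ : Γ) (φ : indSpace ι θ), (∀ x, π x ≠ γ → (φ : W → ℂ) x = 0) →
      Uv φ = μ γ • φ := by
    intro γ φ hφ
    have h1 := supp_smul_e ι π θ hι hπ hexact γ φ hφ
    rw [h1, map_smul, hψ γ, smul_comm]
  have hμ1 : ∀ γ : Γ, μ γ = μ 1 := by
    intro γ
    obtain ⟨w, hw⟩ := hπ γ⁻¹
    have hχsupp : ∀ x, π x ≠ γ →
        (((indRep ι θ w : indSpace ι θ →ₗ[ℂ] indSpace ι θ)
          (myE ι π θ hι hπ hexact 1)) : W → ℂ) x = 0 := by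
      intro x hx
      rw [act_apply, myE_apply, if_neg]
      intro hc1
      rw [map_mul, hw] at hc1
      exact hx (mul_inv_eq_one.mp hc1)
    have hχ1 := hUφ γ _ hχsupp
    have hχ2 : Uv ((indRep ι θ w : indSpace ι θ →ₗ[ℂ] indSpace ι θ)
        (myE ι π θ hι hπ hexact 1))
        = μ 1 • (indRep ι θ w : indSpace ι θ →ₗ[ℂ] indSpace ι θ)
            (myE ι π θ hι hπ hexact 1) := by
      rw [hU' w, hψ 1, map_smul]
    have hχne : (((indRep ι θ w : indSpace ι θ →ₗ[ℂ] indSpace ι θ)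
        (myE ι π θ hι hπ hexact 1)) : W → ℂ) (mySec π hπ 1 * w⁻¹) = 1 := by
      rw [act_apply, inv_mul_cancel_right, myE_sec]
    have h2 := congrArg (fun φ : indSpace ι θ => (φ : W → ℂ) (mySec π hπ 1 * w⁻¹))
      (hχ1.symm.trans hχ2)
    rw [coe_smul_apply, coe_smul_apply, hχne, mul_one, mul_one] at h2
    exact h2
  have hmain : Uv = μ 1 • 1 := by
    apply LinearMap.ext
    intro φ
    have hdec := sum_myRes ι π θ hexact φ
    calc Uv φ = Uv (∑ γ : Γ, myRes ι π θ hexact γ φ) := by rw [hdec]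
      _ = ∑ γ : Γ, Uv (myRes ι π θ hexact γ φ) := map_sum Uv _ _
      _ = ∑ γ : Γ, μ 1 • myRes ι π θ hexact γ φ := by
          apply Finset.sum_congr rfl
          intro γ _
          rw [hUφ γ _ (fun x h => by rw [myRes_apply, if_neg h]), hμ1 γ]
      _ = μ 1 • ∑ γ : Γ, myRes ι π θ hexact γ φ := by rw [Finset.smul_sum]
      _ = μ 1 • φ := by rw [hdec]
      _ = (μ 1 • (1 : indSpace ι θ →ₗ[ℂ] indSpace ι θ)) φ := rfl
  have hne : μ 1 ≠ 0 := by
    intro h0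
    have h1 : Uv (myE ι π θ hι hπ hexact 1) = 0 := by
      rw [hψ 1, h0, zero_smul]
    exact unit_ne_zero ι θ U (myE_ne ι π θ hι hπ hexact 1) h1
  exact ⟨Units.mk0 (μ 1) hne, hmain⟩

end Aux2
section Aux3

variable {A W Γ : Type*} [CommGroup A] [Group W] [Group Γ]
variable (ι : A →* W) (π : W →* Γ) (c : Γ →* MulAut A) (θ : A →* ℂˣ)

noncomputable def sUnit : ℂˣ →* (indSpace ι θ →ₗ[ℂ] indSpace ι θ)ˣ :=
  Units.map (algebraMap ℂ (Module.End ℂ (indSpace ι θ))).toMonoidHom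

lemma sUnit_val (μ : ℂˣ) :
    ((sUnit ι θ μ : (indSpace ι θ →ₗ[ℂ] indSpace ι θ)ˣ) : indSpace ι θ →ₗ[ℂ] indSpace ι θ)
      = (μ : ℂ) • 1 := by
  show algebraMap ℂ (Module.End ℂ (indSpace ι θ)) (μ : ℂ) = (μ : ℂ) • 1
  rw [Algebra.algebraMap_eq_smul_one]

lemma mySmulOneMul (t : ℂ) (f : indSpace ι θ →ₗ[ℂ] indSpace ι θ) :
    (t • (1 : indSpace ι θ →ₗ[ℂ] indSpace ι θ)) * f = t • f := by
  rw [smul_mul_assoc, one_mul]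

lemma myMulSmulOne (t : ℂ) (f : indSpace ι θ →ₗ[ℂ] indSpace ι θ) :
    f * (t • (1 : indSpace ι θ →ₗ[ℂ] indSpace ι θ)) = t • f := by
  rw [mul_smul_comm, mul_one]

lemma sUnit_central (μ : ℂˣ) :
    sUnit ι θ μ ∈ Subgroup.center (indSpace ι θ →ₗ[ℂ] indSpace ι θ)ˣ := by
  rw [Subgroup.mem_center_iff]
  intro g
  apply Units.ext
  rw [Units.val_mul, Units.val_mul, sUnit_val, mySmulOneMul, myMulSmulOne]

lemma sUnit_comm (μ : ℂˣ) (g : (indSpace ι θ →ₗ[ℂ] indSpace ι θ)ˣ) :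
    g * sUnit ι θ μ = sUnit ι θ μ * g :=
  Subgroup.mem_center_iff.mp (sUnit_central ι θ μ) g

lemma sUnit_inj (hι : Function.Injective ι) (hπ : Function.Surjective π)
    (hexact : MonoidHom.ker π = MonoidHom.range ι) :
    Function.Injective (sUnit ι θ : ℂˣ → (indSpace ι θ →ₗ[ℂ] indSpace ι θ)ˣ) := by
  intro μ μ' h
  have h1 := congrArg (fun u : (indSpace ι θ →ₗ[ℂ] indSpace ι θ)ˣ =>
    (((u : indSpace ι θ →ₗ[ℂ] indSpace ι θ) (myE ι π θ hι hπ hexact 1)) : W → ℂ)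
      (mySec π hπ 1)) h
  rw [sUnit_val, sUnit_val] at h1
  apply Units.ext
  have h2 : ∀ ν : ℂˣ, ((((ν : ℂ) • (1 : indSpace ι θ →ₗ[ℂ] indSpace ι θ))
      (myE ι π θ hι hπ hexact 1)) : W → ℂ) (mySec π hπ 1) = (ν : ℂ) := by
    intro ν
    have : ((ν : ℂ) • (1 : indSpace ι θ →ₗ[ℂ] indSpace ι θ)) (myE ι π θ hι hπ hexact 1)
        = (ν : ℂ) • myE ι π θ hι hπ hexact 1 := rfl
    rw [this, coe_smul_apply, myE_sec, mul_one]
  rw [h2, h2] at h1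
  exact h1

lemma central_scalar [Finite Γ]
    (hι : Function.Injective ι) (hπ : Function.Surjective π)
    (hexact : MonoidHom.ker π = MonoidHom.range ι)
    (hconj : ∀ (w : W) (a : A), w * ι a * w⁻¹ = ι (c (π w) a))
    (hθ : ∀ γ : Γ, (∀ a : A, θ (c γ a) = θ a) → γ = 1)
    {z : (indSpace ι θ →ₗ[ℂ] indSpace ι θ)ˣ}
    (hz : z ∈ Subgroup.center (indSpace ι θ →ₗ[ℂ] indSpace ι θ)ˣ) :
    ∃ μ : ℂˣ, z = sUnit ι θ μ := by
  have hcomm : ∀ w : W,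
      (z : indSpace ι θ →ₗ[ℂ] indSpace ι θ) * (indRep ι θ w : indSpace ι θ →ₗ[ℂ] indSpace ι θ)
        = (indRep ι θ w : indSpace ι θ →ₗ[ℂ] indSpace ι θ) * z := by
    intro w
    have := Subgroup.mem_center_iff.mp hz (indRep ι θ w)
    exact (congrArg Units.val this).symm
  obtain ⟨μ, hμ⟩ := scalar_of_commute ι π c θ hι hπ hexact hconj hθ z hcomm
  refine ⟨μ, Units.ext ?_⟩
  rw [hμ, sUnit_val]

lemma unitsShuffle1 (x y z : ℂˣ) : (x * y⁻¹ * z)⁻¹ * x = y * z⁻¹ := by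
  rw [mul_inv, mul_inv, inv_inv]
  rw [mul_comm _ x, ← mul_assoc, mul_inv_cancel_left]

lemma unitsShuffle2 (x y z : ℂˣ) : x * y⁻¹ * z * y = x * z := by
  rw [mul_comm _ y, mul_comm (x * y⁻¹) z, mul_comm x y⁻¹, mul_left_comm y z,
    mul_inv_cancel_left, mul_comm]

lemma R_unique (hι : Function.Injective ι) (hπ : Function.Surjective π)
    (hexact : MonoidHom.ker π = MonoidHom.range ι)
    {T : (indSpace ι θ →ₗ[ℂ] indSpace ι θ)ˣ} {μ μ' : ℂˣ} {w : W}
    (h1 : T * indRep ι θ w = sUnit ι θ μ * (indRep ι θ w * T))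
    (h2 : T * indRep ι θ w = sUnit ι θ μ' * (indRep ι θ w * T)) : μ = μ' := by
  apply sUnit_inj ι π θ hι hπ hexact
  exact mul_right_cancel (h1.symm.trans h2)

end Aux3
section Aux4

variable {A W Γ : Type*} [CommGroup A] [Group W] [Group Γ]
variable (ι : A →* W) (π : W →* Γ) (c : Γ →* MulAut A) (θ : A →* ℂˣ)

lemma comm_left (μ : ℂˣ) (g X : (indSpace ι θ →ₗ[ℂ] indSpace ι θ)ˣ) :
    g * (sUnit ι θ μ * X) = sUnit ι θ μ * (g * X) := by
  rw [← mul_assoc, sUnit_comm, mul_assoc]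

noncomputable def repT
    (x : Subgroup.centralizer
      (Set.range ((QuotientGroup.mk' (Subgroup.center (indSpace ι θ →ₗ[ℂ] indSpace ι θ)ˣ)).comp
        (indRep ι θ)))) : (indSpace ι θ →ₗ[ℂ] indSpace ι θ)ˣ :=
  (QuotientGroup.mk'_surjective (Subgroup.center (indSpace ι θ →ₗ[ℂ] indSpace ι θ)ˣ)
    (x : (indSpace ι θ →ₗ[ℂ] indSpace ι θ)ˣ ⧸
      Subgroup.center (indSpace ι θ →ₗ[ℂ] indSpace ι θ)ˣ)).choose

lemma repT_spec
    (x : Subgroup.centralizer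
      (Set.range ((QuotientGroup.mk' (Subgroup.center (indSpace ι θ →ₗ[ℂ] indSpace ι θ)ˣ)).comp
        (indRep ι θ)))) :
    QuotientGroup.mk' (Subgroup.center (indSpace ι θ →ₗ[ℂ] indSpace ι θ)ˣ) (repT ι θ x)
      = (x : (indSpace ι θ →ₗ[ℂ] indSpace ι θ)ˣ ⧸
          Subgroup.center (indSpace ι θ →ₗ[ℂ] indSpace ι θ)ˣ) :=
  (QuotientGroup.mk'_surjective _ _).choose_spec

lemma key [Finite Γ]
    (hι : Function.Injective ι) (hπ : Function.Surjective π)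
    (hexact : MonoidHom.ker π = MonoidHom.range ι)
    (hconj : ∀ (w : W) (a : A), w * ι a * w⁻¹ = ι (c (π w) a))
    (hθ : ∀ γ : Γ, (∀ a : A, θ (c γ a) = θ a) → γ = 1)
    (x : Subgroup.centralizer
      (Set.range ((QuotientGroup.mk' (Subgroup.center (indSpace ι θ →ₗ[ℂ] indSpace ι θ)ˣ)).comp
        (indRep ι θ))))
    (w : W) :
    ∃ μ : ℂˣ, repT ι θ x * indRep ι θ w = sUnit ι θ μ * (indRep ι θ w * repT ι θ x) := by
  have hmem : (QuotientGroup.mk' (Subgroup.center (indSpace ι θ →ₗ[ℂ] indSpace ι θ)ˣ)).comp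
      (indRep ι θ) w ∈ Set.range ((QuotientGroup.mk'
        (Subgroup.center (indSpace ι θ →ₗ[ℂ] indSpace ι θ)ˣ)).comp (indRep ι θ)) := ⟨w, rfl⟩
  have hc := Subgroup.mem_centralizer_iff.mp x.2 _ hmem
  rw [← repT_spec ι θ x] at hc
  have hc2 : QuotientGroup.mk' (Subgroup.center (indSpace ι θ →ₗ[ℂ] indSpace ι θ)ˣ)
      (indRep ι θ w * repT ι θ x)
      = QuotientGroup.mk' (Subgroup.center (indSpace ι θ →ₗ[ℂ] indSpace ι θ)ˣ)
      (repT ι θ x * indRep ι θ w) := by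
    rw [map_mul, map_mul]
    exact hc
  obtain ⟨z, hz, hze⟩ := (QuotientGroup.mk'_eq_mk' _).mp hc2
  obtain ⟨μ, rfl⟩ := central_scalar ι π c θ hι hπ hexact hconj hθ hz
  refine ⟨μ, ?_⟩
  rw [← hze, sUnit_comm]

noncomputable def lamF [Finite Γ]
    (hι : Function.Injective ι) (hπ : Function.Surjective π)
    (hexact : MonoidHom.ker π = MonoidHom.range ι)
    (hconj : ∀ (w : W) (a : A), w * ι a * w⁻¹ = ι (c (π w) a))
    (hθ : ∀ γ : Γ, (∀ a : A, θ (c γ a) = θ a) → γ = 1)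
    (x : Subgroup.centralizer
      (Set.range ((QuotientGroup.mk' (Subgroup.center (indSpace ι θ →ₗ[ℂ] indSpace ι θ)ˣ)).comp
        (indRep ι θ)))) : W →* ℂˣ where
  toFun w := (key ι π c θ hι hπ hexact hconj hθ x w).choose
  map_one' := by
    apply R_unique ι π θ hι hπ hexact
      ((key ι π c θ hι hπ hexact hconj hθ x 1).choose_spec)
    rw [map_one, map_one, mul_one, one_mul, one_mul]
  map_mul' w₁ w₂ := by
    have h1 := (key ι π c θ hι hπ hexact hconj hθ x w₁).choose_spec
    have h2 := (key ι π c θ hι hπ hexact hconj hθ x w₂).choose_spec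
    apply R_unique ι π θ hι hπ hexact
      ((key ι π c θ hι hπ hexact hconj hθ x (w₁ * w₂)).choose_spec)
    set T := repT ι θ x
    set μ₁ := (key ι π c θ hι hπ hexact hconj hθ x w₁).choose
    set μ₂ := (key ι π c θ hι hπ hexact hconj hθ x w₂).choose
    rw [map_mul, map_mul]
    calc T * (indRep ι θ w₁ * indRep ι θ w₂)
        = (T * indRep ι θ w₁) * indRep ι θ w₂ := by group
      _ = (sUnit ι θ μ₁ * (indRep ι θ w₁ * T)) * indRep ι θ w₂ := by rw [h1]
      _ = sUnit ι θ μ₁ * (indRep ι θ w₁ * (T * indRep ι θ w₂)) := by group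
      _ = sUnit ι θ μ₁ * (indRep ι θ w₁ * (sUnit ι θ μ₂ * (indRep ι θ w₂ * T))) := by rw [h2]
      _ = sUnit ι θ μ₁ * (sUnit ι θ μ₂ * (indRep ι θ w₁ * (indRep ι θ w₂ * T))) := by
          rw [comm_left]
      _ = sUnit ι θ μ₁ * sUnit ι θ μ₂ * (indRep ι θ w₁ * indRep ι θ w₂ * T) := by group

lemma lamF_spec [Finite Γ]
    (hι : Function.Injective ι) (hπ : Function.Surjective π)
    (hexact : MonoidHom.ker π = MonoidHom.range ι)
    (hconj : ∀ (w : W) (a : A), w * ι a * w⁻¹ = ι (c (π w) a))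
    (hθ : ∀ γ : Γ, (∀ a : A, θ (c γ a) = θ a) → γ = 1)
    (x : Subgroup.centralizer
      (Set.range ((QuotientGroup.mk' (Subgroup.center (indSpace ι θ →ₗ[ℂ] indSpace ι θ)ˣ)).comp
        (indRep ι θ))))
    (w : W) :
    repT ι θ x * indRep ι θ w
      = sUnit ι θ (lamF ι π c θ hι hπ hexact hconj hθ x w) * (indRep ι θ w * repT ι θ x) :=
  (key ι π c θ hι hπ hexact hconj hθ x w).choose_spec

lemma lam_conj (lam : W →* ℂˣ) (g w : W) : lam (g * w * g⁻¹) = lam w := by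
  rw [map_mul, map_mul, map_inv, mul_right_comm, mul_inv_cancel, one_mul]

end Aux4
section Aux5

variable {A W Γ : Type*} [CommGroup A] [Group W] [Group Γ]
variable (ι : A →* W) (π : W →* Γ) (c : Γ →* MulAut A) (θ : A →* ℂˣ)
variable (lam : W →* ℂˣ) (t : W)

abbrev THyp : Prop := ∀ (φ : indSpace ι θ) (a : A) (xx : W),
  (((lam (ι a * xx))⁻¹ : ℂˣ) : ℂ) * (φ : W → ℂ) (t * (ι a * xx))
    = (θ a : ℂ) * ((((lam xx)⁻¹ : ℂˣ) : ℂ) * (φ : W → ℂ) (t * xx))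

abbrev SHyp : Prop := ∀ (φ : indSpace ι θ) (a : A) (xx : W),
  ((lam (t⁻¹ * (ι a * xx)) : ℂˣ) : ℂ) * (φ : W → ℂ) (t⁻¹ * (ι a * xx))
    = (θ a : ℂ) * (((lam (t⁻¹ * xx) : ℂˣ) : ℂ) * (φ : W → ℂ) (t⁻¹ * xx))

noncomputable def myT (hT : THyp ι θ lam t) :
    indSpace ι θ →ₗ[ℂ] indSpace ι θ where
  toFun φ := ⟨fun xx => (((lam xx)⁻¹ : ℂˣ) : ℂ) * (φ : W → ℂ) (t * xx),
    fun a xx => hT φ a xx⟩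
  map_add' φ ψ := Subtype.ext (funext fun xx => by
    show (((lam xx)⁻¹ : ℂˣ) : ℂ) * ((φ : W → ℂ) (t * xx) + (ψ : W → ℂ) (t * xx))
      = (((lam xx)⁻¹ : ℂˣ) : ℂ) * (φ : W → ℂ) (t * xx)
        + (((lam xx)⁻¹ : ℂˣ) : ℂ) * (ψ : W → ℂ) (t * xx)
    ring)
  map_smul' m φ := Subtype.ext (funext fun xx => by
    show (((lam xx)⁻¹ : ℂˣ) : ℂ) * (m * (φ : W → ℂ) (t * xx))
      = m * ((((lam xx)⁻¹ : ℂˣ) : ℂ) * (φ : W → ℂ) (t * xx))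
    ring)

lemma myT_apply (hT : THyp ι θ lam t) (φ : indSpace ι θ) (xx : W) :
    ((myT ι θ lam t hT φ : indSpace ι θ) : W → ℂ) xx
      = (((lam xx)⁻¹ : ℂˣ) : ℂ) * (φ : W → ℂ) (t * xx) := rfl

noncomputable def myS (hS : SHyp ι θ lam t) :
    indSpace ι θ →ₗ[ℂ] indSpace ι θ where
  toFun φ := ⟨fun xx => ((lam (t⁻¹ * xx) : ℂˣ) : ℂ) * (φ : W → ℂ) (t⁻¹ * xx),
    fun a xx => hS φ a xx⟩
  map_add' φ ψ := Subtype.ext (funext fun xx => by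
    show ((lam (t⁻¹ * xx) : ℂˣ) : ℂ) * ((φ : W → ℂ) (t⁻¹ * xx) + (ψ : W → ℂ) (t⁻¹ * xx))
      = ((lam (t⁻¹ * xx) : ℂˣ) : ℂ) * (φ : W → ℂ) (t⁻¹ * xx)
        + ((lam (t⁻¹ * xx) : ℂˣ) : ℂ) * (ψ : W → ℂ) (t⁻¹ * xx)
    ring)
  map_smul' m φ := Subtype.ext (funext fun xx => by
    show ((lam (t⁻¹ * xx) : ℂˣ) : ℂ) * (m * (φ : W → ℂ) (t⁻¹ * xx))
      = m * (((lam (t⁻¹ * xx) : ℂˣ) : ℂ) * (φ : W → ℂ) (t⁻¹ * xx))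
    ring)

lemma myS_apply (hS : SHyp ι θ lam t) (φ : indSpace ι θ) (xx : W) :
    ((myS ι θ lam t hS φ : indSpace ι θ) : W → ℂ) xx
      = ((lam (t⁻¹ * xx) : ℂˣ) : ℂ) * (φ : W → ℂ) (t⁻¹ * xx) := rfl

lemma myTS (hT : THyp ι θ lam t) (hS : SHyp ι θ lam t) : myT ι θ lam t hT * myS ι θ lam t hS = 1 := by
  apply LinearMap.ext; intro φ
  rw [Module.End.mul_apply, Module.End.one_apply]
  apply Subtype.ext; funext xx
  rw [myT_apply, myS_apply, inv_mul_cancel_left, ← mul_assoc, ← Units.val_mul,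
    inv_mul_cancel, Units.val_one, one_mul]

lemma myST (hT : THyp ι θ lam t) (hS : SHyp ι θ lam t) : myS ι θ lam t hS * myT ι θ lam t hT = 1 := by
  apply LinearMap.ext; intro φ
  rw [Module.End.mul_apply, Module.End.one_apply]
  apply Subtype.ext; funext xx
  rw [myS_apply, myT_apply, mul_inv_cancel_left, ← mul_assoc, ← Units.val_mul,
    mul_inv_cancel, Units.val_one, one_mul]

noncomputable def myUnit (hT : THyp ι θ lam t) (hS : SHyp ι θ lam t) : (indSpace ι θ →ₗ[ℂ] indSpace ι θ)ˣ :=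
  ⟨myT ι θ lam t hT, myS ι θ lam t hS, myTS ι θ lam t hT hS, myST ι θ lam t hT hS⟩

lemma myUnit_val (hT : THyp ι θ lam t) (hS : SHyp ι θ lam t) :
    ((myUnit ι θ lam t hT hS : (indSpace ι θ →ₗ[ℂ] indSpace ι θ)ˣ) :
      indSpace ι θ →ₗ[ℂ] indSpace ι θ) = myT ι θ lam t hT := rfl

lemma myRel (hT : THyp ι θ lam t) (hS : SHyp ι θ lam t) (w : W) :
    myUnit ι θ lam t hT hS * indRep ι θ w
      = sUnit ι θ (lam w) * (indRep ι θ w * myUnit ι θ lam t hT hS) := by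
  apply Units.ext
  rw [Units.val_mul, Units.val_mul, Units.val_mul, sUnit_val, mySmulOneMul, myUnit_val]
  apply LinearMap.ext; intro φ
  rw [Module.End.mul_apply, LinearMap.smul_apply, Module.End.mul_apply]
  apply Subtype.ext; funext xx
  rw [myT_apply, coe_smul_apply, act_apply, act_apply, myT_apply]
  rw [show t * (xx * w) = t * xx * w from (mul_assoc t xx w).symm, map_mul, mul_inv]
  have hu2 : lam w * ((lam xx)⁻¹ * (lam w)⁻¹) = (lam xx)⁻¹ := by
    rw [mul_comm ((lam xx)⁻¹) ((lam w)⁻¹), mul_inv_cancel_left]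
  calc (((lam xx)⁻¹ : ℂˣ) : ℂ) * (φ : W → ℂ) (t * xx * w)
      = ((lam w * ((lam xx)⁻¹ * (lam w)⁻¹) : ℂˣ) : ℂ) * (φ : W → ℂ) (t * xx * w) := by
        rw [hu2]
    _ = ((lam w : ℂˣ) : ℂ)
        * ((((lam xx)⁻¹ * (lam w)⁻¹ : ℂˣ) : ℂ) * (φ : W → ℂ) (t * xx * w)) := by
        rw [Units.val_mul]; ring

end Aux5
set_option maxHeartbeats 1000000 in
/-- For a group extension `1 → A → W → Γ → 1` with `Γ` finite and `A` abelian, and a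
character `θ : A → ℂˣ` whose `Γ`-twists are pairwise distinct, the group `A_φ` of elements
of `PGL(V)` commuting with the image of the projective representation obtained from
`Θ = Ind_A^W θ` is isomorphic to the group `𝒜_θ` of characters `λ : W → ℂˣ` whose
restriction to `A` is `a ↦ θ(aᵗ) θ(a)⁻¹` for some `τ ∈ Γ`. -/
theorem stmt9 (A W Γ : Type*) [CommGroup A] [Group W] [Group Γ] [Finite Γ]
    (ι : A →* W) (π : W →* Γ) (c : Γ →* MulAut A)
    (hι : Function.Injective ι) (hπ : Function.Surjective π)
    (hexact : MonoidHom.ker π = MonoidHom.range ι)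
    (hconj : ∀ (w : W) (a : A), w * ι a * w⁻¹ = ι (c (π w) a))
    (θ : A →* ℂˣ)
    (hθ : ∀ γ : Γ, (∀ a : A, θ (c γ a) = θ a) → γ = 1) :
    ∃ φf : Subgroup.centralizer
        (Set.range ((QuotientGroup.mk' (Subgroup.center (indSpace ι θ →ₗ[ℂ] indSpace ι θ)ˣ)).comp
          (indRep ι θ))) → (W →* ℂˣ),
      Function.Injective φf ∧ (∀ x y, φf (x * y) = φf x * φf y) ∧
      Set.range φf = {lam : W →* ℂˣ | ∃ τ : Γ, ∀ a : A, lam (ι a) = θ (c τ a) * (θ a)⁻¹} := by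
  refine ⟨lamF ι π c θ hι hπ hexact hconj hθ, ?_, ?_, ?_⟩
  · -- injectivity
    intro x y h
    have hxy : ∀ w, lamF ι π c θ hι hπ hexact hconj hθ x w
        = lamF ι π c θ hι hπ hexact hconj hθ y w := fun w => by rw [h]
    have hcomm : ∀ w : W, ((repT ι θ y)⁻¹ * repT ι θ x) * indRep ι θ w
        = indRep ι θ w * ((repT ι θ y)⁻¹ * repT ι θ x) := by
      intro w
      have hx := lamF_spec ι π c θ hι hπ hexact hconj hθ x w
      have hy := lamF_spec ι π c θ hι hπ hexact hconj hθ y w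
      rw [← hxy w] at hy
      have h3 : sUnit ι θ (lamF ι π c θ hι hπ hexact hconj hθ x w) * indRep ι θ w
          = repT ι θ y * indRep ι θ w * (repT ι θ y)⁻¹ := by
        rw [hy]; group
      calc ((repT ι θ y)⁻¹ * repT ι θ x) * indRep ι θ w
          = (repT ι θ y)⁻¹ * (repT ι θ x * indRep ι θ w) := by group
        _ = (repT ι θ y)⁻¹ * (sUnit ι θ (lamF ι π c θ hι hπ hexact hconj hθ x w)
              * (indRep ι θ w * repT ι θ x)) := by rw [hx]
        _ = (repT ι θ y)⁻¹ * ((sUnit ι θ (lamF ι π c θ hι hπ hexact hconj hθ x w)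
              * indRep ι θ w) * repT ι θ x) := by group
        _ = (repT ι θ y)⁻¹ * ((repT ι θ y * indRep ι θ w * (repT ι θ y)⁻¹) * repT ι θ x) := by
            rw [h3]
        _ = indRep ι θ w * ((repT ι θ y)⁻¹ * repT ι θ x) := by group
    have hval : ∀ w : W,
        (((repT ι θ y)⁻¹ * repT ι θ x : (indSpace ι θ →ₗ[ℂ] indSpace ι θ)ˣ) :
          indSpace ι θ →ₗ[ℂ] indSpace ι θ)
          * (indRep ι θ w : indSpace ι θ →ₗ[ℂ] indSpace ι θ)
          = (indRep ι θ w : indSpace ι θ →ₗ[ℂ] indSpace ι θ)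
            * ((repT ι θ y)⁻¹ * repT ι θ x : (indSpace ι θ →ₗ[ℂ] indSpace ι θ)ˣ) := by
      intro w
      have h4 := congrArg Units.val (hcomm w)
      rwa [Units.val_mul, Units.val_mul] at h4
    obtain ⟨μ, hμ⟩ := scalar_of_commute ι π c θ hι hπ hexact hconj hθ _ hval
    have hcentral : (repT ι θ y)⁻¹ * repT ι θ x
        ∈ Subgroup.center (indSpace ι θ →ₗ[ℂ] indSpace ι θ)ˣ := by
      have h5 : (repT ι θ y)⁻¹ * repT ι θ x = sUnit ι θ μ := Units.ext (by rw [hμ, sUnit_val])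
      rw [h5]
      exact sUnit_central ι θ μ
    have hq : QuotientGroup.mk' (Subgroup.center (indSpace ι θ →ₗ[ℂ] indSpace ι θ)ˣ)
        (repT ι θ y)
        = QuotientGroup.mk' (Subgroup.center (indSpace ι θ →ₗ[ℂ] indSpace ι θ)ˣ)
          (repT ι θ x) :=
      (QuotientGroup.mk'_eq_mk' _).mpr ⟨(repT ι θ y)⁻¹ * repT ι θ x, hcentral, by group⟩
    apply Subtype.ext
    rw [← repT_spec ι θ x, ← repT_spec ι θ y]
    exact hq.symm
  · -- multiplicativity
    intro x y
    apply MonoidHom.ext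
    intro w
    have hx := lamF_spec ι π c θ hι hπ hexact hconj hθ x w
    have hy := lamF_spec ι π c θ hι hπ hexact hconj hθ y w
    have hq : QuotientGroup.mk' (Subgroup.center (indSpace ι θ →ₗ[ℂ] indSpace ι θ)ˣ)
        (repT ι θ x * repT ι θ y)
        = QuotientGroup.mk' (Subgroup.center (indSpace ι θ →ₗ[ℂ] indSpace ι θ)ˣ)
          (repT ι θ (x * y)) := by
      rw [map_mul, repT_spec, repT_spec, repT_spec]
      rfl
    obtain ⟨z, hz, hze⟩ := (QuotientGroup.mk'_eq_mk' _).mp hq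
    obtain ⟨ν, rfl⟩ := central_scalar ι π c θ hι hπ hexact hconj hθ hz
    have hrel : repT ι θ (x * y) * indRep ι θ w
        = sUnit ι θ (lamF ι π c θ hι hπ hexact hconj hθ x w
            * lamF ι π c θ hι hπ hexact hconj hθ y w)
          * (indRep ι θ w * repT ι θ (x * y)) := by
      rw [← hze, map_mul]
      calc (repT ι θ x * repT ι θ y * sUnit ι θ ν) * indRep ι θ w
          = repT ι θ x * (repT ι θ y * (sUnit ι θ ν * indRep ι θ w)) := by group
        _ = repT ι θ x * (repT ι θ y * (indRep ι θ w * sUnit ι θ ν)) := by rw [sUnit_comm]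
        _ = repT ι θ x * ((repT ι θ y * indRep ι θ w) * sUnit ι θ ν) := by group
        _ = repT ι θ x * ((sUnit ι θ (lamF ι π c θ hι hπ hexact hconj hθ y w)
              * (indRep ι θ w * repT ι θ y)) * sUnit ι θ ν) := by rw [hy]
        _ = repT ι θ x * (sUnit ι θ (lamF ι π c θ hι hπ hexact hconj hθ y w)
              * ((indRep ι θ w * repT ι θ y) * sUnit ι θ ν)) := by group
        _ = sUnit ι θ (lamF ι π c θ hι hπ hexact hconj hθ y w)
              * (repT ι θ x * ((indRep ι θ w * repT ι θ y) * sUnit ι θ ν)) := by rw [comm_left]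
        _ = sUnit ι θ (lamF ι π c θ hι hπ hexact hconj hθ y w)
              * ((repT ι θ x * indRep ι θ w) * (repT ι θ y * sUnit ι θ ν)) := by group
        _ = sUnit ι θ (lamF ι π c θ hι hπ hexact hconj hθ y w)
              * ((sUnit ι θ (lamF ι π c θ hι hπ hexact hconj hθ x w)
                  * (indRep ι θ w * repT ι θ x)) * (repT ι θ y * sUnit ι θ ν)) := by rw [hx]
        _ = sUnit ι θ (lamF ι π c θ hι hπ hexact hconj hθ y w)
              * (sUnit ι θ (lamF ι π c θ hι hπ hexact hconj hθ x w)
                  * (indRep ι θ w * (repT ι θ x * (repT ι θ y * sUnit ι θ ν)))) := by group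
        _ = sUnit ι θ (lamF ι π c θ hι hπ hexact hconj hθ y w)
              * sUnit ι θ (lamF ι π c θ hι hπ hexact hconj hθ x w)
              * (indRep ι θ w * (repT ι θ x * repT ι θ y * sUnit ι θ ν)) := by group
        _ = sUnit ι θ (lamF ι π c θ hι hπ hexact hconj hθ x w)
              * sUnit ι θ (lamF ι π c θ hι hπ hexact hconj hθ y w)
              * (indRep ι θ w * (repT ι θ x * repT ι θ y * sUnit ι θ ν)) := by
            rw [← map_mul, ← map_mul, mul_comm (lamF ι π c θ hι hπ hexact hconj hθ y w)]
    exact R_unique ι π θ hι hπ hexact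
      (lamF_spec ι π c θ hι hπ hexact hconj hθ (x * y) w) hrel
  · -- range
    apply Set.eq_of_subset_of_subset
    · rintro lam ⟨x, rfl⟩
      have hψne : (repT ι θ x : indSpace ι θ →ₗ[ℂ] indSpace ι θ)
          (myE ι π θ hι hπ hexact 1) ≠ 0 :=
        unit_ne_zero ι θ (repT ι θ x) (myE_ne ι π θ hι hπ hexact 1)
      obtain ⟨x₀, hx₀⟩ := exists_ne_zero_coord ι θ hψne
      have hc1 : ∀ a : A, c (1 : Γ) a = a := fun a => by rw [map_one, MulAut.one_apply]
      have base : ∀ a : A, lamF ι π c θ hι hπ hexact hconj hθ x (ι a)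
          = θ a * (θ (c (π x₀) a))⁻¹ := by
        intro a
        have hs := lamF_spec ι π c θ hι hπ hexact hconj hθ x (ι a)
        have hL : (((repT ι θ x * indRep ι θ (ι a) : (indSpace ι θ →ₗ[ℂ] indSpace ι θ)ˣ) :
            indSpace ι θ →ₗ[ℂ] indSpace ι θ) (myE ι π θ hι hπ hexact 1) : W → ℂ) x₀
            = (θ a : ℂ) * (((repT ι θ x : indSpace ι θ →ₗ[ℂ] indSpace ι θ)
                (myE ι π θ hι hπ hexact 1)) : W → ℂ) x₀ := by
          rw [Units.val_mul, Module.End.mul_apply, eig_e ι π c θ hconj hι hπ hexact 1 a,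
            hc1 a, map_smul, coe_smul_apply]
        have hR : (((sUnit ι θ (lamF ι π c θ hι hπ hexact hconj hθ x (ι a))
              * (indRep ι θ (ι a) * repT ι θ x) : (indSpace ι θ →ₗ[ℂ] indSpace ι θ)ˣ) :
            indSpace ι θ →ₗ[ℂ] indSpace ι θ) (myE ι π θ hι hπ hexact 1) : W → ℂ) x₀
            = (lamF ι π c θ hι hπ hexact hconj hθ x (ι a) : ℂ)
              * ((θ (c (π x₀) a) : ℂ) * (((repT ι θ x : indSpace ι θ →ₗ[ℂ] indSpace ι θ)
                  (myE ι π θ hι hπ hexact 1)) : W → ℂ) x₀) := by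
          rw [Units.val_mul, Units.val_mul, Module.End.mul_apply, Module.End.mul_apply, sUnit_val]
          have hsm : ((lamF ι π c θ hι hπ hexact hconj hθ x (ι a) : ℂ)
              • (1 : indSpace ι θ →ₗ[ℂ] indSpace ι θ))
              ((indRep ι θ (ι a) : indSpace ι θ →ₗ[ℂ] indSpace ι θ)
                ((repT ι θ x : indSpace ι θ →ₗ[ℂ] indSpace ι θ) (myE ι π θ hι hπ hexact 1)))
              = (lamF ι π c θ hι hπ hexact hconj hθ x (ι a) : ℂ)
                • ((indRep ι θ (ι a) : indSpace ι θ →ₗ[ℂ] indSpace ι θ)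
                  ((repT ι θ x : indSpace ι θ →ₗ[ℂ] indSpace ι θ)
                    (myE ι π θ hι hπ hexact 1))) := rfl
          rw [hsm, coe_smul_apply, act_apply, actA ι π c θ hconj]
        have h4 := congrArg (fun u : (indSpace ι θ →ₗ[ℂ] indSpace ι θ)ˣ =>
          (((u : indSpace ι θ →ₗ[ℂ] indSpace ι θ) (myE ι π θ hι hπ hexact 1)) : W → ℂ) x₀) hs
        rw [hL, hR] at h4
        rw [← mul_assoc] at h4
        have h5 := mul_right_cancel₀ hx₀ h4
        have h6 : θ a = lamF ι π c θ hι hπ hexact hconj hθ x (ι a) * θ (c (π x₀) a) :=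
          Units.ext (by rw [Units.val_mul]; exact h5)
        rw [h6]; group
      refine ⟨(π x₀)⁻¹, fun a => ?_⟩
      have hcc : c (π x₀) (c ((π x₀)⁻¹) a) = a := by
        rw [← MulAut.mul_apply, ← map_mul, mul_inv_cancel, map_one, MulAut.one_apply]
      have hc2 : ι (c ((π x₀)⁻¹) a) = x₀⁻¹ * ι a * (x₀⁻¹)⁻¹ := by
        rw [hconj x₀⁻¹ a, map_inv π x₀]
      have hconjlam : lamF ι π c θ hι hπ hexact hconj hθ x (ι (c ((π x₀)⁻¹) a))
          = lamF ι π c θ hι hπ hexact hconj hθ x (ι a) := by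
        rw [hc2]
        exact lam_conj _ x₀⁻¹ (ι a)
      calc lamF ι π c θ hι hπ hexact hconj hθ x (ι a)
          = lamF ι π c θ hι hπ hexact hconj hθ x (ι (c ((π x₀)⁻¹) a)) := hconjlam.symm
        _ = θ (c ((π x₀)⁻¹) a) * (θ (c (π x₀) (c ((π x₀)⁻¹) a)))⁻¹ := base (c ((π x₀)⁻¹) a)
        _ = θ (c ((π x₀)⁻¹) a) * (θ a)⁻¹ := by rw [hcc]
    · intro lam hlam
      obtain ⟨τ, hl⟩ := hlam
      obtain ⟨t, ht⟩ : ∃ t : W, π t = τ := hπ τ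
      have hmemT : THyp ι θ lam t := by
        intro φ a xx
        have e2 : t * (ι a * xx) = ι (c τ a) * (t * xx) := by
          have h7 := hconj t a
          rw [ht] at h7
          rw [← h7]; group
        rw [e2, φ.2 (c τ a) (t * xx), map_mul, hl a]
        have hu : (θ (c τ a) * (θ a)⁻¹ * lam xx)⁻¹ * θ (c τ a) = θ a * (lam xx)⁻¹ :=
          unitsShuffle1 _ _ _
        calc (((θ (c τ a) * (θ a)⁻¹ * lam xx)⁻¹ : ℂˣ) : ℂ)
              * ((θ (c τ a) : ℂ) * (φ : W → ℂ) (t * xx))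
            = ((((θ (c τ a) * (θ a)⁻¹ * lam xx)⁻¹ * θ (c τ a) : ℂˣ)) : ℂ)
              * (φ : W → ℂ) (t * xx) := by push_cast; ring
          _ = ((θ a * (lam xx)⁻¹ : ℂˣ) : ℂ) * (φ : W → ℂ) (t * xx) := by rw [hu]
          _ = (θ a : ℂ) * ((((lam xx)⁻¹ : ℂˣ) : ℂ) * (φ : W → ℂ) (t * xx)) := by
              push_cast; ring
      have hmemS : SHyp ι θ lam t := by
        intro φ a xx
        have hti : π t⁻¹ = τ⁻¹ := by rw [map_inv, ht]
        have e3 : t⁻¹ * (ι a * xx) = ι (c (τ⁻¹) a) * (t⁻¹ * xx) := by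
          have h7 := hconj t⁻¹ a
          rw [hti] at h7
          rw [← h7]; group
        rw [e3, φ.2 (c (τ⁻¹) a) (t⁻¹ * xx), map_mul, hl (c (τ⁻¹) a)]
        have hcc2 : c τ (c (τ⁻¹) a) = a := by
          rw [← MulAut.mul_apply, ← map_mul, mul_inv_cancel, map_one, MulAut.one_apply]
        rw [hcc2]
        have hu : θ a * (θ (c (τ⁻¹) a))⁻¹ * lam (t⁻¹ * xx) * θ (c (τ⁻¹) a)
            = θ a * lam (t⁻¹ * xx) :=
          unitsShuffle2 _ _ _
        calc ((θ a * (θ (c (τ⁻¹) a))⁻¹ * lam (t⁻¹ * xx) : ℂˣ) : ℂ)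
              * ((θ (c (τ⁻¹) a) : ℂ) * (φ : W → ℂ) (t⁻¹ * xx))
            = ((θ a * (θ (c (τ⁻¹) a))⁻¹ * lam (t⁻¹ * xx) * θ (c (τ⁻¹) a) : ℂˣ) : ℂ)
              * (φ : W → ℂ) (t⁻¹ * xx) := by push_cast; ring
          _ = ((θ a * lam (t⁻¹ * xx) : ℂˣ) : ℂ) * (φ : W → ℂ) (t⁻¹ * xx) := by rw [hu]
          _ = (θ a : ℂ) * (((lam (t⁻¹ * xx) : ℂˣ) : ℂ) * (φ : W → ℂ) (t⁻¹ * xx)) := by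
              push_cast; ring
      have hmem : QuotientGroup.mk' (Subgroup.center (indSpace ι θ →ₗ[ℂ] indSpace ι θ)ˣ)
          (myUnit ι θ lam t hmemT hmemS)
          ∈ Subgroup.centralizer
            (Set.range ((QuotientGroup.mk'
              (Subgroup.center (indSpace ι θ →ₗ[ℂ] indSpace ι θ)ˣ)).comp (indRep ι θ))) := by
        refine Subgroup.mem_centralizer_iff.mpr ?_
        rintro g ⟨w, rfl⟩
        rw [MonoidHom.comp_apply, ← map_mul, ← map_mul]
        apply (QuotientGroup.mk'_eq_mk' _).mpr
        refine ⟨sUnit ι θ (lam w), sUnit_central ι θ (lam w), ?_⟩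
        rw [sUnit_comm, ← myRel ι θ lam t hmemT hmemS w]
      refine ⟨⟨QuotientGroup.mk' _ (myUnit ι θ lam t hmemT hmemS), hmem⟩, ?_⟩
      apply MonoidHom.ext
      intro w
      have hq : QuotientGroup.mk' (Subgroup.center (indSpace ι θ →ₗ[ℂ] indSpace ι θ)ˣ)
          (myUnit ι θ lam t hmemT hmemS)
          = QuotientGroup.mk' (Subgroup.center (indSpace ι θ →ₗ[ℂ] indSpace ι θ)ˣ)
            (repT ι θ ⟨QuotientGroup.mk' _ (myUnit ι θ lam t hmemT hmemS), hmem⟩) := by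
        rw [repT_spec]
      obtain ⟨z, hz, hze⟩ := (QuotientGroup.mk'_eq_mk' _).mp hq
      obtain ⟨ν, rfl⟩ := central_scalar ι π c θ hι hπ hexact hconj hθ hz
      have hrel2 : repT ι θ ⟨QuotientGroup.mk' _ (myUnit ι θ lam t hmemT hmemS), hmem⟩
            * indRep ι θ w
          = sUnit ι θ (lam w) * (indRep ι θ w
            * repT ι θ ⟨QuotientGroup.mk' _ (myUnit ι θ lam t hmemT hmemS), hmem⟩) := by
        rw [← hze]
        calc (myUnit ι θ lam t hmemT hmemS * sUnit ι θ ν) * indRep ι θ w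
            = myUnit ι θ lam t hmemT hmemS * (sUnit ι θ ν * indRep ι θ w) := by group
          _ = myUnit ι θ lam t hmemT hmemS * (indRep ι θ w * sUnit ι θ ν) := by
              rw [sUnit_comm]
          _ = (myUnit ι θ lam t hmemT hmemS * indRep ι θ w) * sUnit ι θ ν := by group
          _ = (sUnit ι θ (lam w) * (indRep ι θ w * myUnit ι θ lam t hmemT hmemS))
              * sUnit ι θ ν := by rw [myRel ι θ lam t hmemT hmemS w]
          _ = sUnit ι θ (lam w) * (indRep ι θ w
              * (myUnit ι θ lam t hmemT hmemS * sUnit ι θ ν)) := by group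
      exact R_unique ι π θ hι hπ hexact
        (lamF_spec ι π c θ hι hπ hexact hconj hθ _ w) hrel2
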